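/- arXiv:2410.01537 — 2 statements merged into one kernel-verified Lean document; each statement's English description precedes it below -/
import Mathlib

section
/- Let γ > 0 and ε ≥ 0 be fixed. Let (d_n), (L_n) be sequences of positive integers and (λ_n) a sequence of positive reals such that d_n → ∞, L_n / d_n → 0, λ_n·√(d_n) → ∞, and λ_n·√(L_n) → 0 as n → ∞. Then γ² − 2γ²·erf( λ_n·√( d_n / (2(1 + 2λ_n²γ²)) ) ) + γ²·ζ(λ_n·√(d_n/2), λ_n²γ²) + (L_n − 1)·ζ(0, λ_n²) + ε² converges to ε² as n → ∞. (Asymptotic Bayes optimality of the oracle attention predictor: its risk tends to the noise level ε².) -/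
/-!
Since `λ_n √L_n → 0` with `L_n ≥ 1`, the scale `λ_n` tends to `0`, while both erf arguments are
of order `λ_n √d_n → ∞`. Hence `erf(·) → 1` and, by dominated convergence (`|erf| ≤ 2`),
`ζ(λ_n √(d_n/2), λ_n²γ²) → 1`, so the first three terms tend to `γ² − 2γ² + γ² = 0`. The term
`(L_n − 1) ζ(0, λ_n²)` is at most `L_n · (4/π) λ_n² = (4/π)(λ_n √L_n)² → 0`, because
`erf u ² ≤ (4/π) u²` and the Gaussian has second moment `λ_n²`.
-/

open MeasureTheory ProbabilityTheory Real Filter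

noncomputable def erf (u : ℝ) : ℝ := 2 / Real.sqrt Real.pi * ∫ r in (0:ℝ)..u, Real.exp (-r ^ 2)

noncomputable def zeta (t s : ℝ) : ℝ := ∫ g, erf (t + g) ^ 2 ∂(gaussianReal 0 s.toNNReal)

open scoped Topology Interval

lemma integrable_exp_neg_sq : Integrable (fun r : ℝ => exp (-r ^ 2)) := by
  simpa using integrable_exp_neg_mul_sq one_pos

@[fun_prop]
lemma continuous_erf : Continuous erf :=
  continuous_const.mul (intervalIntegral.continuous_primitive
    (fun a b => (Continuous.intervalIntegrable (by fun_prop) a b)) 0)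

lemma abs_erf_le_two (u : ℝ) : |erf u| ≤ 2 := by
  have hint : ‖∫ r in (0:ℝ)..u, exp (-r ^ 2)‖ ≤ √π :=
    calc ‖∫ r in (0:ℝ)..u, exp (-r ^ 2)‖ ≤ ∫ r in Ι 0 u, ‖exp (-r ^ 2)‖ :=
          intervalIntegral.norm_integral_le_integral_norm_uIoc
      _ = ∫ r in Ι 0 u, exp (-r ^ 2) := by simp only [norm_eq_abs, abs_exp]
      _ ≤ ∫ r, exp (-r ^ 2) :=
          setIntegral_le_integral integrable_exp_neg_sq (ae_of_all _ fun _ => (exp_pos _).le)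
      _ = √π := by simpa using integral_gaussian 1
  calc |erf u| = 2 / √π * |∫ r in (0:ℝ)..u, exp (-r ^ 2)| := by
        rw [erf, abs_mul, abs_of_pos (by positivity)]
    _ ≤ 2 / √π * √π := by gcongr; exact hint
    _ = 2 := by field_simp

lemma erf_sq_le_four (u : ℝ) : erf u ^ 2 ≤ 4 :=
  calc erf u ^ 2 = |erf u| ^ 2 := (sq_abs _).symm
    _ ≤ 2 ^ 2 := by gcongr; exact abs_erf_le_two u
    _ = 4 := by norm_num

lemma abs_erf_le (u : ℝ) : |erf u| ≤ 2 / √π * |u| := by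
  have hint : ‖∫ r in (0:ℝ)..u, exp (-r ^ 2)‖ ≤ 1 * |u - 0| :=
    intervalIntegral.norm_integral_le_of_norm_le_const fun r _ => by
      rw [norm_eq_abs, abs_exp, exp_le_one_iff, neg_nonpos]
      exact sq_nonneg r
  rw [erf, abs_mul, abs_of_pos (by positivity : (0:ℝ) < 2 / √π)]
  exact mul_le_mul_of_nonneg_left (by simpa using hint) (by positivity)

lemma erf_sq_le (u : ℝ) : erf u ^ 2 ≤ 4 / π * u ^ 2 :=
  calc erf u ^ 2 = |erf u| ^ 2 := (sq_abs _).symm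
    _ ≤ (2 / √π * |u|) ^ 2 := by gcongr; exact abs_erf_le u
    _ = 4 / π * u ^ 2 := by rw [mul_pow, div_pow, sq_abs, sq_sqrt pi_pos.le]; norm_num

lemma tendsto_erf_atTop : Tendsto erf atTop (𝓝 1) := by
  have h := intervalIntegral_tendsto_integral_Ioi 0 integrable_exp_neg_sq.integrableOn tendsto_id
  have hhalf : ∫ r in Set.Ioi (0:ℝ), exp (-r ^ 2) = √π / 2 := by
    simpa using integral_gaussian_Ioi 1
  rw [hhalf] at h
  have hconst : 2 / √π * (√π / 2) = 1 := by field_simp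
  exact hconst ▸ h.const_mul (2 / √π)

lemma zeta_eq_integral_gaussianReal_one (t : ℝ) {s : ℝ} (hs : 0 ≤ s) :
    zeta t s = ∫ z, erf (t + √s * z) ^ 2 ∂gaussianReal 0 1 := by
  have hmap : (gaussianReal 0 1).map (√s * ·) = gaussianReal 0 s.toNNReal := by
    rw [gaussianReal_map_const_mul]
    congr 1
    · simp
    · ext; simp [sq_sqrt hs, coe_toNNReal _ hs]
  rw [zeta, ← hmap, integral_map (by fun_prop) (by fun_prop)]

lemma zeta_nonneg (t s : ℝ) : 0 ≤ zeta t s :=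
  integral_nonneg fun _ => sq_nonneg _

lemma tendsto_zeta {ι : Type*} {l : Filter ι} [l.IsCountablyGenerated] {t s : ι → ℝ}
    (hs : ∀ i, 0 ≤ s i) (ht : Tendsto t l atTop) (hs0 : Tendsto s l (𝓝 0)) :
    Tendsto (fun i => zeta (t i) (s i)) l (𝓝 1) := by
  simp_rw [zeta_eq_integral_gaussianReal_one _ (hs _)]
  have hone : (1 : ℝ) = ∫ _, (1 : ℝ) ∂gaussianReal 0 1 := by simp
  rw [hone]
  refine tendsto_integral_filter_of_dominated_convergence (fun _ => 4)
    (.of_forall fun i => by fun_prop) (.of_forall fun i => .of_forall fun z => ?_)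
    (integrable_const 4) (.of_forall fun z => ?_)
  · simpa using erf_sq_le_four _
  · have hshift : Tendsto (fun i => √(s i) * z) l (𝓝 0) := by
      simpa using ((continuous_sqrt.tendsto 0).comp hs0).mul_const z
    simpa using (tendsto_erf_atTop.comp (ht.atTop_add hshift)).pow 2

lemma zeta_zero_le {s : ℝ} (hs : 0 ≤ s) : zeta 0 s ≤ 4 / π * s := by
  have hsecond : ∫ g, g ^ 2 ∂gaussianReal 0 s.toNNReal = s := by
    rw [← variance_of_integral_eq_zero aemeasurable_id' (by simp), variance_fun_id_gaussianReal,
      coe_toNNReal _ hs]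
  have hsq : Integrable (fun g : ℝ => g ^ 2) (gaussianReal 0 s.toNNReal) :=
    (memLp_id_gaussianReal 2).integrable_sq
  have herf : Integrable (fun g => erf (0 + g) ^ 2) (gaussianReal 0 s.toNNReal) := by
    exact Integrable.mono' (integrable_const 4) (by fun_prop)
      (.of_forall fun g => by simpa using erf_sq_le_four _)
  calc zeta 0 s ≤ ∫ g, 4 / π * g ^ 2 ∂gaussianReal 0 s.toNNReal :=
        integral_mono herf (hsq.const_mul _) fun g => by simpa using erf_sq_le g
    _ = 4 / π * s := by rw [integral_const_mul, hsecond]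

lemma tendsto_zero_of_mul_tendsto_zero {ι : Type*} {l : Filter ι} {a b : ι → ℝ}
    (hb : ∀ i, 1 ≤ b i) (h : Tendsto (fun i => a i * b i) l (𝓝 0)) : Tendsto a l (𝓝 0) := by
  refine squeeze_zero_norm (fun i => ?_) (by simpa using h.norm)
  rw [norm_eq_abs]
  exact le_mul_of_one_le_right (abs_nonneg _) ((hb i).trans (le_abs_self _))

lemma tendsto_mul_sqrt_div_atTop {ι : Type*} {l : Filter ι} {a d c : ι → ℝ} {c₀ : ℝ}
    (hc₀ : 0 < c₀) (hd : ∀ i, 0 ≤ d i) (had : Tendsto (fun i => a i * √(d i)) l atTop)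
    (hc : Tendsto c l (𝓝 c₀)) : Tendsto (fun i => a i * √(d i / c i)) l atTop := by
  have hinv : Tendsto (fun i => (√(c i))⁻¹) l (𝓝 (√c₀)⁻¹) :=
    ((continuous_sqrt.tendsto _).comp hc).inv₀ (sqrt_pos.mpr hc₀).ne'
  convert had.atTop_mul_pos (inv_pos.mpr (sqrt_pos.mpr hc₀)) hinv using 2 with i
  rw [sqrt_div (hd i), div_eq_mul_inv, mul_assoc]

lemma tendsto_pred_mul_zeta_zero {ι : Type*} {l : Filter ι} {L : ι → ℕ} {a : ι → ℝ}
    (hL : ∀ i, 0 < L i) (h : Tendsto (fun i => a i * √(L i)) l (𝓝 0)) :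
    Tendsto (fun i => ((L i : ℝ) - 1) * zeta 0 (a i ^ 2)) l (𝓝 0) := by
  have hbound : Tendsto (fun i => 4 / π * (a i * √(L i)) ^ 2) l (𝓝 0) := by
    simpa using (h.pow 2).const_mul (4 / π)
  refine squeeze_zero (fun i => ?_) (fun i => ?_) hbound
  · have : (1 : ℝ) ≤ L i := by exact_mod_cast hL i
    exact mul_nonneg (by linarith) (zeta_nonneg _ _)
  · calc ((L i : ℝ) - 1) * zeta 0 (a i ^ 2) ≤ L i * (4 / π * a i ^ 2) :=
          mul_le_mul (by linarith) (zeta_zero_le (sq_nonneg _)) (zeta_nonneg _ _) (by positivity)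
      _ = 4 / π * (a i * √(L i)) ^ 2 := by
          rw [mul_pow, sq_sqrt (Nat.cast_nonneg _)]; ring

theorem stmt2_general (γ ε : ℝ)
    (d L : ℕ → ℕ) (lam : ℕ → ℝ)
    (hL : ∀ n, 0 < L n)
    (hlamd : Tendsto (fun n => lam n * Real.sqrt (d n)) atTop atTop)
    (hlamL : Tendsto (fun n => lam n * Real.sqrt (L n)) atTop (nhds 0)) :
    Tendsto (fun n =>
        γ ^ 2
        - 2 * γ ^ 2 * erf (lam n * Real.sqrt ((d n : ℝ) / (2 * (1 + 2 * (lam n) ^ 2 * γ ^ 2))))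
        + γ ^ 2 * zeta (lam n * Real.sqrt ((d n : ℝ) / 2)) ((lam n) ^ 2 * γ ^ 2)
        + ((L n : ℝ) - 1) * zeta 0 ((lam n) ^ 2) + ε ^ 2)
      atTop (nhds (ε ^ 2)) := by
  have hlam : Tendsto lam atTop (𝓝 0) :=
    tendsto_zero_of_mul_tendsto_zero (fun n => one_le_sqrt.mpr (by exact_mod_cast hL n)) hlamL
  have hvar : Tendsto (fun n => lam n ^ 2 * γ ^ 2) atTop (𝓝 0) := by
    simpa using (hlam.pow 2).mul_const (γ ^ 2)
  have hden : Tendsto (fun n => 2 * (1 + 2 * lam n ^ 2 * γ ^ 2)) atTop (𝓝 2) := by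
    simpa [mul_assoc] using ((hvar.const_mul 2).const_add 1).const_mul 2
  have hA := tendsto_erf_atTop.comp
    (tendsto_mul_sqrt_div_atTop two_pos (fun n => Nat.cast_nonneg _) hlamd hden)
  have hB := tendsto_zeta (fun n => by positivity)
    (tendsto_mul_sqrt_div_atTop two_pos (fun n => Nat.cast_nonneg _) hlamd tendsto_const_nhds) hvar
  have hC := tendsto_pred_mul_zeta_zero hL hlamL
  convert ((((tendsto_const_nhds (x := γ ^ 2)).sub (hA.const_mul (2 * γ ^ 2))).add
    (hB.const_mul (γ ^ 2))).add hC).add (tendsto_const_nhds (x := ε ^ 2)) using 2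
  · rfl
  · ring

/-- Asymptotic Bayes optimality of the oracle attention predictor: its risk tends to the
noise level `ε²` in the joint scaling `d_n → ∞`, `L_n/d_n → 0`, `λ_n √d_n → ∞`,
`λ_n √L_n → 0`. -/
theorem stmt2 (γ ε : ℝ) (hγ : 0 < γ) (hε : 0 ≤ ε)
    (d L : ℕ → ℕ) (lam : ℕ → ℝ)
    (hd : ∀ n, 0 < d n) (hL : ∀ n, 0 < L n) (hlam : ∀ n, 0 < lam n)
    (hdlim : Tendsto (fun n => (d n : ℝ)) atTop atTop)
    (hLd : Tendsto (fun n => (L n : ℝ) / (d n : ℝ)) atTop (nhds 0))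
    (hlamd : Tendsto (fun n => lam n * Real.sqrt (d n)) atTop atTop)
    (hlamL : Tendsto (fun n => lam n * Real.sqrt (L n)) atTop (nhds 0)) :
    Tendsto (fun n =>
        γ ^ 2
        - 2 * γ ^ 2 * erf (lam n * Real.sqrt ((d n : ℝ) / (2 * (1 + 2 * (lam n) ^ 2 * γ ^ 2))))
        + γ ^ 2 * zeta (lam n * Real.sqrt ((d n : ℝ) / 2)) ((lam n) ^ 2 * γ ^ 2)
        + ((L n : ℝ) - 1) * zeta 0 ((lam n) ^ 2) + ε ^ 2)
      atTop (nhds (ε ^ 2)) :=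
  stmt2_general γ ε d L lam hL hlamd hlamL
end

section
/- Assume d ≥ 1, L ≥ 1, γ > 0, λ > 0. The point (0, 0) is a critical point of R (its gradient vanishes there), R is twice differentiable at (0, 0), and the Hessian matrix of R at (0, 0) has strictly negative determinant; consequently it has one strictly positive and one strictly negative eigenvalue, so (0, 0) is a saddle point of R. -/
open MeasureTheory ProbabilityTheory Real Filter

/-- The reduced risk `R(κ, ν)` on the invariant manifold. -/
noncomputable def Rred (d L : ℕ) (γ lam ε : ℝ) (κ ν : ℝ) : ℝ :=
  γ ^ 2 - 2 * γ ^ 2 * ν * erf (lam * Real.sqrt ((d : ℝ) / 2) * κ /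
      Real.sqrt (1 + 2 * lam ^ 2 * γ ^ 2))
    + γ ^ 2 * zeta (lam * Real.sqrt ((d : ℝ) / 2) * κ) (lam ^ 2 * γ ^ 2)
    + ((L : ℝ) - 1) * zeta 0 (lam ^ 2) + ε ^ 2

/-- Partial derivative `∂κR` of the reduced risk with respect to its first argument. -/
noncomputable def dkR (d L : ℕ) (γ lam ε : ℝ) (κ ν : ℝ) : ℝ :=
  deriv (fun x => Rred d L γ lam ε x ν) κ

/-- Partial derivative `∂νR` of the reduced risk with respect to its second argument. -/
noncomputable def dvR (d L : ℕ) (γ lam ε : ℝ) (κ ν : ℝ) : ℝ :=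
  deriv (fun y => Rred d L γ lam ε κ y) ν

/-- The PGD map `g_α`. -/
noncomputable def pgd (d L : ℕ) (γ lam ε α : ℝ) (p : ℝ × ℝ) : ℝ × ℝ :=
  ((p.1 - α * dkR d L γ lam ε p.1 p.2 * (1 - p.1 ^ 2)) /
      Real.sqrt (1 + α ^ 2 * (dkR d L γ lam ε p.1 p.2) ^ 2 * (1 - p.1 ^ 2)),
   (p.2 - α * dvR d L γ lam ε p.1 p.2 * (1 - p.2 ^ 2)) /
      Real.sqrt (1 + α ^ 2 * (dvR d L γ lam ε p.1 p.2) ^ 2 * (1 - p.2 ^ 2)))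

/-- The square `[−1, 1]²`. -/
def sqIcc : Set (ℝ × ℝ) := {p | p.1 ∈ Set.Icc (-1 : ℝ) 1 ∧ p.2 ∈ Set.Icc (-1 : ℝ) 1}

/-!
`R` is affine in `ν` with slope `-2γ² erf(cκ)`, `erf` is odd, and `κ ↦ ζ(aκ, s)` is even because
the centred Gaussian is symmetric. Hence both first partials vanish at the origin, `∂²_ν R ≡ 0`,
and the mixed partial is `m = -2γ² erf'(0) c ≠ 0`, so the Hessian `[[*, m], [m, 0]]` has
determinant `-m² < 0`. The same term rules out an extremum: `R(0, ν)` does not depend on `ν`, so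
an extremum at the origin would force `κ ↦ R(κ, ν)` to have one at `κ = 0` for all small `ν`,
whereas its slope there is `m ν`. Twice differentiability of `ζ` in `t` comes from
differentiating under the Gaussian integral, `erf²` having bounded derivatives.
-/

open Topology ContDiff

lemma hasDerivAt_erf (x : ℝ) : HasDerivAt erf (2 / √π * exp (-x ^ 2)) x := by
  have hc : Continuous fun r : ℝ => exp (-r ^ 2) := by fun_prop
  exact (intervalIntegral.integral_hasDerivAt_right (hc.intervalIntegrable 0 x)
    hc.stronglyMeasurable.stronglyMeasurableAtFilter hc.continuousAt).const_mul _

lemma deriv_erf : deriv erf = fun x => 2 / √π * exp (-x ^ 2) :=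
  funext fun x => (hasDerivAt_erf x).deriv

lemma differentiable_erf : Differentiable ℝ erf := fun x => (hasDerivAt_erf x).differentiableAt

lemma contDiff_erf : ContDiff ℝ ∞ erf :=
  contDiff_infty_iff_deriv.2 ⟨differentiable_erf, by rw [deriv_erf]; fun_prop⟩

@[simp] lemma erf_zero : erf 0 = 0 := by simp [erf]

lemma erf_neg (x : ℝ) : erf (-x) = -erf x := by
  have h := intervalIntegral.integral_comp_neg (a := 0) (b := x) fun r => exp (-r ^ 2)
  simp only [neg_sq, neg_zero] at h
  rw [erf, erf, h, intervalIntegral.integral_symm, mul_neg]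

lemma erf_nonneg {x : ℝ} (hx : 0 ≤ x) : 0 ≤ erf x :=
  mul_nonneg (by positivity) (intervalIntegral.integral_nonneg hx fun _ _ => (exp_pos _).le)

lemma erf_le_one {x : ℝ} (hx : 0 ≤ x) : erf x ≤ 1 := by
  have hint : IntegrableOn (fun r : ℝ => exp (-r ^ 2)) (Set.Ioi 0) := by
    simpa using integrableOn_Ioi_exp_neg_mul_sq_iff.2 (zero_lt_one (α := ℝ))
  have hle : ∫ r in (0 : ℝ)..x, exp (-r ^ 2) ≤ ∫ r in Set.Ioi (0 : ℝ), exp (-r ^ 2) := by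
    rw [intervalIntegral.integral_of_le hx]
    exact setIntegral_mono_set hint (Eventually.of_forall fun _ => (exp_pos _).le)
      (Eventually.of_forall fun _ hr => hr.1)
  have hhalf : ∫ r in Set.Ioi (0 : ℝ), exp (-r ^ 2) = √π / 2 := by
    simpa using integral_gaussian_Ioi 1
  calc erf x ≤ 2 / √π * (√π / 2) :=
        mul_le_mul_of_nonneg_left (hhalf ▸ hle) (by positivity)
    _ = 1 := by field_simp

lemma abs_erf_le_one (x : ℝ) : |erf x| ≤ 1 := by
  rcases le_total 0 x with hx | hx
  · rw [abs_of_nonneg (erf_nonneg hx)]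
    exact erf_le_one hx
  · rw [← neg_neg x, erf_neg, abs_neg, abs_of_nonneg (erf_nonneg (neg_nonneg.2 hx))]
    exact erf_le_one (neg_nonneg.2 hx)

lemma two_div_sqrt_pi_le_two : 2 / √π ≤ 2 := by
  have : 1 ≤ √π := Real.one_le_sqrt.2 (by linarith [pi_gt_three])
  exact div_le_self zero_le_two this

lemma two_mul_abs_mul_exp_neg_sq_le_one (x : ℝ) : 2 * |x| * exp (-x ^ 2) ≤ 1 := by
  have h : 2 * |x| ≤ exp (x ^ 2) := by
    nlinarith [add_one_le_exp (x ^ 2), sq_abs x, sq_nonneg (|x| - 1)]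
  rw [exp_neg, ← div_eq_mul_inv, div_le_one (exp_pos _)]
  exact h

lemma deriv_erf_sq : deriv (fun x => erf x ^ 2) = fun x => 2 * erf x * (2 / √π * exp (-x ^ 2)) :=
  funext fun x => by simpa using ((hasDerivAt_erf x).fun_pow 2).deriv

lemma hasDerivAt_deriv_erf_sq (x : ℝ) : HasDerivAt (deriv fun x => erf x ^ 2)
    (2 * (2 / √π * exp (-x ^ 2)) ^ 2 + 2 * erf x * (2 / √π * (exp (-x ^ 2) * (-(2 * x))))) x := by
  have hexp : HasDerivAt (fun x => 2 / √π * exp (-x ^ 2))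
      (2 / √π * (exp (-x ^ 2) * (-(2 * x)))) x :=
    ((hasDerivAt_pow 2 x).neg.exp.const_mul _).congr_deriv (by simp)
  rw [deriv_erf_sq]
  exact (((hasDerivAt_erf x).const_mul 2).mul hexp).congr_deriv (by ring)

lemma abs_two_div_sqrt_pi_mul_exp_le_two (x : ℝ) : |2 / √π * exp (-x ^ 2)| ≤ 2 := by
  rw [abs_of_pos (by positivity)]
  calc 2 / √π * exp (-x ^ 2) ≤ 2 * 1 :=
        mul_le_mul two_div_sqrt_pi_le_two (exp_le_one_iff.2 (by nlinarith)) (exp_pos _).le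
          zero_le_two
    _ = 2 := mul_one 2

lemma bounded_iteratedDeriv_erf_sq :
    ∀ k ≤ 2, ∃ C, ∀ x, |iteratedDeriv k (fun x => erf x ^ 2) x| ≤ C := by
  intro k hk
  interval_cases k
  · exact ⟨1, fun x => by simpa [abs_pow] using abs_erf_le_one x⟩
  · refine ⟨4, fun x => ?_⟩
    rw [iteratedDeriv_one, deriv_erf_sq, abs_mul, abs_mul, abs_two]
    nlinarith [abs_erf_le_one x, abs_two_div_sqrt_pi_mul_exp_le_two x, abs_nonneg (erf x)]
  · refine ⟨12, fun x => ?_⟩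
    rw [iteratedDeriv_succ, iteratedDeriv_one, (hasDerivAt_deriv_erf_sq x).deriv]
    have hgauss := abs_two_div_sqrt_pi_mul_exp_le_two x
    have hxe : |2 / √π * (exp (-x ^ 2) * -(2 * x))| ≤ 2 := by
      have habs : |2 / √π * (exp (-x ^ 2) * -(2 * x))| = 2 / √π * (2 * |x| * exp (-x ^ 2)) := by
        rw [abs_mul, abs_mul, abs_neg, abs_mul, abs_two, abs_of_pos (by positivity : 0 < 2 / √π),
          abs_of_pos (exp_pos _)]
        ring
      rw [habs]
      calc 2 / √π * (2 * |x| * exp (-x ^ 2)) ≤ 2 * 1 :=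
            mul_le_mul two_div_sqrt_pi_le_two (two_mul_abs_mul_exp_neg_sq_le_one x) (by positivity)
              zero_le_two
        _ = 2 := mul_one 2
    calc _ ≤ |2 * (2 / √π * exp (-x ^ 2)) ^ 2|
          + |2 * erf x * (2 / √π * (exp (-x ^ 2) * -(2 * x)))| := abs_add_le _ _
      _ ≤ 2 * 2 ^ 2 + 2 * 1 * 2 := by
          rw [abs_mul, abs_mul, abs_mul, abs_two, abs_pow]
          gcongr
          exact abs_erf_le_one x
      _ = 12 := by norm_num

section IntegralCompAdd

variable {μ : Measure ℝ} [IsFiniteMeasure μ] {f : ℝ → ℝ}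

lemma integrable_comp_add_of_abs_le (hf : Continuous f) {C : ℝ} (hC : ∀ x, |f x| ≤ C) (t : ℝ) :
    Integrable (fun g => f (t + g)) μ :=
  (integrable_const C).mono' (hf.comp (continuous_const_add t)).aestronglyMeasurable
    (Eventually.of_forall fun g => hC (t + g))

lemma continuous_integral_comp_add (hf : Continuous f) {C : ℝ} (hC : ∀ x, |f x| ≤ C) :
    Continuous fun t => ∫ g, f (t + g) ∂μ :=
  continuous_of_dominated (fun t => (hf.comp (continuous_const_add t)).aestronglyMeasurable)
    (fun t => Eventually.of_forall fun g => hC (t + g)) (integrable_const C)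
    (Eventually.of_forall fun g => hf.comp (continuous_add_const g))

lemma hasDerivAt_integral_comp_add (hf : Differentiable ℝ f) {C C' : ℝ} (hC : ∀ x, |f x| ≤ C)
    (hC' : ∀ x, |deriv f x| ≤ C') (t₀ : ℝ) :
    HasDerivAt (fun t => ∫ g, f (t + g) ∂μ) (∫ g, deriv f (t₀ + g) ∂μ) t₀ :=
  (hasDerivAt_integral_of_dominated_loc_of_deriv_le (Metric.ball_mem_nhds t₀ one_pos)
    (Eventually.of_forall fun t =>
      (hf.continuous.comp (continuous_const_add t)).aestronglyMeasurable)
    (integrable_comp_add_of_abs_le hf.continuous hC t₀)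
    ((measurable_deriv f).comp (measurable_const_add t₀)).aestronglyMeasurable
    (Eventually.of_forall fun g t _ => hC' (t + g)) (integrable_const C')
    (Eventually.of_forall fun g t _ => (hf (t + g)).hasDerivAt.comp_add_const t g)).2

theorem contDiff_integral_comp_add (n : ℕ) {f : ℝ → ℝ} (hf : ContDiff ℝ n f)
    (hbdd : ∀ k ≤ n, ∃ C, ∀ x, |iteratedDeriv k f x| ≤ C) :
    ContDiff ℝ n fun t => ∫ g, f (t + g) ∂μ := by
  induction n generalizing f with
  | zero =>
    obtain ⟨C, hC⟩ := hbdd 0 le_rfl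
    exact contDiff_zero.2 (continuous_integral_comp_add hf.continuous (by simpa using hC))
  | succ n ih =>
    obtain ⟨C, hC⟩ := hbdd 0 (Nat.zero_le _)
    obtain ⟨C', hC'⟩ := hbdd 1 (by omega)
    simp only [iteratedDeriv_zero, iteratedDeriv_one] at hC hC'
    push_cast at hf ⊢
    obtain ⟨hdiff, -, hderiv⟩ := contDiff_succ_iff_deriv.1 hf
    have hI := hasDerivAt_integral_comp_add (μ := μ) hdiff hC hC'
    refine contDiff_succ_iff_deriv.2 ⟨fun t => (hI t).differentiableAt, by simp, ?_⟩
    rw [funext fun t => (hI t).deriv]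
    exact ih hderiv fun k hk => by simpa [iteratedDeriv_succ'] using hbdd (k + 1) (by omega)

end IntegralCompAdd

lemma contDiff_zeta (s : ℝ) : ContDiff ℝ 2 fun t => zeta t s :=
  contDiff_integral_comp_add 2 (f := fun x => erf x ^ 2) ((contDiff_infty.1 contDiff_erf 2).pow 2)
    bounded_iteratedDeriv_erf_sq

lemma zeta_neg (t s : ℝ) : zeta (-t) s = zeta t s := by
  have hmap : (gaussianReal 0 s.toNNReal).map (fun x => -x) = gaussianReal 0 s.toNNReal := by
    simpa using gaussianReal_map_neg (μ := 0) (v := s.toNNReal)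
  have hmeas : AEStronglyMeasurable (fun g => erf (-t + g) ^ 2)
      ((gaussianReal 0 s.toNNReal).map fun x => -x) :=
    ((differentiable_erf.continuous.comp (continuous_const_add _)).pow 2).aestronglyMeasurable
  rw [zeta, ← hmap, integral_map measurable_neg.aemeasurable hmeas, zeta]
  simp_rw [← neg_add, erf_neg, neg_sq]

lemma deriv_eq_zero_of_even {f : ℝ → ℝ} (hf : ∀ x, f (-x) = f x) : deriv f 0 = 0 := by
  have h := deriv_comp_neg (f := f) (x := 0)
  simp only [hf, neg_zero] at h
  linarith

lemma hasDerivAt_zeta_zero (s : ℝ) : HasDerivAt (fun t => zeta t s) 0 0 := by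
  have h := (((contDiff_zeta s).differentiable two_ne_zero) 0).hasDerivAt
  rwa [deriv_eq_zero_of_even fun t => zeta_neg t s] at h

-- `2 / √π = erf' 0`
noncomputable def rredMixedPartial (d : ℕ) (γ lam : ℝ) : ℝ :=
  -(2 * γ ^ 2 * (2 / √π * (lam * √((d : ℝ) / 2) / √(1 + 2 * lam ^ 2 * γ ^ 2))))

lemma rredMixedPartial_ne_zero {d : ℕ} {γ lam : ℝ} (hd : d ≠ 0) (hγ : γ ≠ 0) (hlam : lam ≠ 0) :
    rredMixedPartial d γ lam ≠ 0 := by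
  have hd' : (0 : ℝ) < d / 2 := by positivity
  unfold rredMixedPartial
  exact neg_ne_zero.2 (mul_ne_zero (by positivity) (mul_ne_zero (by positivity)
    (div_ne_zero (mul_ne_zero hlam (sqrt_ne_zero'.2 hd')) (by positivity))))

lemma hasDerivAt_erf_mul_div_zero (a b : ℝ) :
    HasDerivAt (fun x => erf (a * x / b)) (2 / √π * (a / b)) 0 := by
  have h := (hasDerivAt_erf 0).comp_of_eq 0 ((hasDerivAt_id' (0 : ℝ)).const_mul a |>.div_const b)
    (by simp)
  simpa [Function.comp_def] using h

section ReducedRisk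

variable (d L : ℕ) (γ lam ε : ℝ)

lemma hasDerivAt_Rred_snd (κ ν : ℝ) :
    HasDerivAt (fun y => Rred d L γ lam ε κ y)
      (-(2 * γ ^ 2 * erf (lam * √((d : ℝ) / 2) * κ / √(1 + 2 * lam ^ 2 * γ ^ 2)))) ν := by
  have h : (fun y => Rred d L γ lam ε κ y) = fun y => Rred d L γ lam ε κ 0 +
      -(2 * γ ^ 2 * erf (lam * √((d : ℝ) / 2) * κ / √(1 + 2 * lam ^ 2 * γ ^ 2))) * y := by
    funext y
    simp only [Rred]
    ring
  rw [h]
  exact (((hasDerivAt_id' ν).const_mul _).const_add _).congr_deriv (mul_one _)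

lemma Rred_zero_fst (ν : ℝ) : Rred d L γ lam ε 0 ν = Rred d L γ lam ε 0 0 := by
  simp [Rred]

lemma hasDerivAt_Rred_fst_zero (ν : ℝ) :
    HasDerivAt (fun x => Rred d L γ lam ε x ν) (rredMixedPartial d γ lam * ν) 0 := by
  have hzeta : HasDerivAt (fun x => zeta (lam * √((d : ℝ) / 2) * x) (lam ^ 2 * γ ^ 2)) 0 0 := by
    simpa [Function.comp_def] using (hasDerivAt_zeta_zero (lam ^ 2 * γ ^ 2)).comp_of_eq 0
      ((hasDerivAt_id' (0 : ℝ)).const_mul (lam * √((d : ℝ) / 2))) (by simp)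
  have h := ((((hasDerivAt_erf_mul_div_zero (lam * √((d : ℝ) / 2))
    √(1 + 2 * lam ^ 2 * γ ^ 2)).const_mul (2 * γ ^ 2 * ν)).const_sub (γ ^ 2)).add
    (hzeta.const_mul (γ ^ 2))).add_const (((L : ℝ) - 1) * zeta 0 (lam ^ 2) + ε ^ 2)
  refine (h.congr_deriv (by rw [rredMixedPartial]; ring)).congr_of_eventuallyEq
    (Eventually.of_forall fun x => ?_)
  simp only [Rred, Pi.add_apply]
  ring

lemma hasDerivAt_deriv_Rred_snd_fst (ν : ℝ) :
    HasDerivAt (fun x => deriv (fun y => Rred d L γ lam ε x y) ν) (rredMixedPartial d γ lam) 0 := by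
  simp_rw [(hasDerivAt_Rred_snd d L γ lam ε _ ν).deriv]
  exact ((hasDerivAt_erf_mul_div_zero _ _).const_mul (2 * γ ^ 2)).neg.congr_deriv
    (by rw [rredMixedPartial])

lemma hasDerivAt_deriv_Rred_fst_snd (ν : ℝ) :
    HasDerivAt (fun y => deriv (fun x => Rred d L γ lam ε x y) 0) (rredMixedPartial d γ lam) ν := by
  simp_rw [(hasDerivAt_Rred_fst_zero d L γ lam ε _).deriv]
  simpa using (hasDerivAt_id ν).const_mul (rredMixedPartial d γ lam)

lemma deriv_deriv_Rred_snd (κ ν : ℝ) :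
    deriv (fun y => deriv (fun y' => Rred d L γ lam ε κ y') y) ν = 0 := by
  simp_rw [(hasDerivAt_Rred_snd d L γ lam ε κ _).deriv]
  exact deriv_const _ _

lemma contDiff_Rred : ContDiff ℝ 2 fun p : ℝ × ℝ => Rred d L γ lam ε p.1 p.2 := by
  have herf := contDiff_infty.1 contDiff_erf 2
  have hzeta := contDiff_zeta (lam ^ 2 * γ ^ 2)
  unfold Rred
  fun_prop

end ReducedRisk

section Slices

variable {X Y β : Type*} [TopologicalSpace X] [TopologicalSpace Y] [Preorder β]
  {f : X × Y → β} {a : X} {b : Y}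

lemma IsLocalMin.eventually_isLocalMin_slice (h : IsLocalMin f (a, b))
    (hconst : ∀ y, f (a, y) = f (a, b)) : ∀ᶠ y in 𝓝 b, IsLocalMin (fun x => f (x, y)) a := by
  have h' : ∀ᶠ p in 𝓝 a ×ˢ 𝓝 b, f (a, b) ≤ f p := by
    rw [← nhds_prod_eq]
    exact h
  obtain ⟨pa, hpa, pb, hpb, hp⟩ := eventually_prod_iff.1 h'
  filter_upwards [hpb] with y hy
  filter_upwards [hpa] with x hx
  exact (hconst y).trans_le (hp hx hy)

lemma IsLocalExtr.eventually_isLocalExtr_slice (h : IsLocalExtr f (a, b))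
    (hconst : ∀ y, f (a, y) = f (a, b)) : ∀ᶠ y in 𝓝 b, IsLocalExtr (fun x => f (x, y)) a := by
  refine h.elim (fun h => ?_) fun h => ?_
  · exact (h.eventually_isLocalMin_slice hconst).mono fun _ => IsMinFilter.isExtr
  · exact (IsLocalMin.eventually_isLocalMin_slice (β := βᵒᵈ) h hconst).mono
      fun _ => IsMaxFilter.isExtr

end Slices

lemma not_isLocalExtr_Rred {d L : ℕ} {γ lam ε : ℝ} (hm : rredMixedPartial d γ lam ≠ 0) :
    ¬ IsLocalExtr (fun p : ℝ × ℝ => Rred d L γ lam ε p.1 p.2) (0, 0) := by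
  intro h
  obtain ⟨ν, hextr, hν⟩ := ((eventually_nhdsWithin_of_eventually_nhds (s := {0}ᶜ)
    (h.eventually_isLocalExtr_slice (Rred_zero_fst d L γ lam ε))).and self_mem_nhdsWithin).exists
  exact mul_ne_zero hm hν (hextr.hasDerivAt_eq_zero (hasDerivAt_Rred_fst_zero d L γ lam ε ν))

theorem Matrix.IsHermitian.exists_pos_neg_eigenvalue_of_det_neg {A : Matrix (Fin 2) (Fin 2) ℝ}
    (hA : A.IsHermitian) (hdet : A.det < 0) :
    ∃ (μ₁ μ₂ : ℝ) (v₁ v₂ : Fin 2 → ℝ), 0 < μ₁ ∧ μ₂ < 0 ∧ v₁ ≠ 0 ∧ v₂ ≠ 0 ∧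
      A.mulVec v₁ = μ₁ • v₁ ∧ A.mulVec v₂ = μ₂ • v₂ := by
  have hv (j : Fin 2) : ⇑(hA.eigenvectorBasis j) ≠ 0 := fun h =>
    hA.eigenvectorBasis.orthonormal.ne_zero j (by ext i; simpa using congrFun h i)
  rw [hA.det_eq_prod_eigenvalues, Fin.prod_univ_two] at hdet
  rcases mul_neg_iff.1 hdet with ⟨h₀, h₁⟩ | ⟨h₀, h₁⟩
  · exact ⟨_, _, _, _, h₀, h₁, hv 0, hv 1, hA.mulVec_eigenvectorBasis 0,
      hA.mulVec_eigenvectorBasis 1⟩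
  · exact ⟨_, _, _, _, h₁, h₀, hv 1, hv 0, hA.mulVec_eigenvectorBasis 1,
      hA.mulVec_eigenvectorBasis 0⟩

theorem stmt7_general (d L : ℕ) (hd : 1 ≤ d) (γ lam ε : ℝ)
    (hγ : 0 < γ) (hlam : 0 < lam) :
    let f : ℝ × ℝ → ℝ := fun p => Rred d L γ lam ε p.1 p.2
    let hκκ : ℝ := deriv (fun x => deriv (fun x' => Rred d L γ lam ε x' 0) x) 0
    let hκν : ℝ := deriv (fun x => deriv (fun y => Rred d L γ lam ε x y) 0) 0
    let hνκ : ℝ := deriv (fun y => deriv (fun x => Rred d L γ lam ε x y) 0) 0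
    let hνν : ℝ := deriv (fun y => deriv (fun y' => Rred d L γ lam ε 0 y') y) 0
    let H : Matrix (Fin 2) (Fin 2) ℝ := !![hκκ, hκν; hνκ, hνν]
    dkR d L γ lam ε 0 0 = 0 ∧ dvR d L γ lam ε 0 0 = 0 ∧
    ContDiffAt ℝ 2 f (0, 0) ∧
    H.det < 0 ∧
    (∃ (μ₁ μ₂ : ℝ) (v₁ v₂ : Fin 2 → ℝ), 0 < μ₁ ∧ μ₂ < 0 ∧ v₁ ≠ 0 ∧ v₂ ≠ 0 ∧
      H.mulVec v₁ = μ₁ • v₁ ∧ H.mulVec v₂ = μ₂ • v₂) ∧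
    ¬ IsLocalMin f (0, 0) ∧ ¬ IsLocalMax f (0, 0) := by
  intro f hκκ hκν hνκ hνν H
  have hm : rredMixedPartial d γ lam ≠ 0 := rredMixedPartial_ne_zero (by omega) hγ.ne' hlam.ne'
  have hH : H = !![hκκ, rredMixedPartial d γ lam; rredMixedPartial d γ lam, 0] := by
    simp only [H, hκν, hνκ, hνν, (hasDerivAt_deriv_Rred_snd_fst d L γ lam ε 0).deriv,
      (hasDerivAt_deriv_Rred_fst_snd d L γ lam ε 0).deriv, deriv_deriv_Rred_snd]
  have hdet : H.det < 0 := by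
    rw [hH, Matrix.det_fin_two_of]
    nlinarith [sq_pos_of_ne_zero hm]
  have hsymm : H.IsHermitian := by
    rw [hH]
    ext i j
    fin_cases i <;> fin_cases j <;> rfl
  refine ⟨by simpa [dkR] using (hasDerivAt_Rred_fst_zero d L γ lam ε 0).deriv,
    by simp [dvR, (hasDerivAt_Rred_snd d L γ lam ε 0 0).deriv],
    (contDiff_Rred d L γ lam ε).contDiffAt, hdet, Matrix.IsHermitian.exists_pos_neg_eigenvalue_of_det_neg hsymm hdet, ?_, ?_⟩
  · exact fun h => not_isLocalExtr_Rred hm (IsMinFilter.isExtr h)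
  · exact fun h => not_isLocalExtr_Rred hm (IsMaxFilter.isExtr h)

/-- `(0,0)` is a critical point of the reduced risk; `R` is twice differentiable at
`(0,0)`; the Hessian at `(0,0)` has negative determinant, hence one positive and one
negative eigenvalue; consequently `(0,0)` is a saddle point (neither a local minimum
nor a local maximum). -/
theorem stmt7 (d L : ℕ) (hd : 1 ≤ d) (hL : 1 ≤ L) (γ lam ε : ℝ)
    (hγ : 0 < γ) (hlam : 0 < lam) (hε : 0 ≤ ε) :
    let f : ℝ × ℝ → ℝ := fun p => Rred d L γ lam ε p.1 p.2
    let hκκ : ℝ := deriv (fun x => deriv (fun x' => Rred d L γ lam ε x' 0) x) 0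
    let hκν : ℝ := deriv (fun x => deriv (fun y => Rred d L γ lam ε x y) 0) 0
    let hνκ : ℝ := deriv (fun y => deriv (fun x => Rred d L γ lam ε x y) 0) 0
    let hνν : ℝ := deriv (fun y => deriv (fun y' => Rred d L γ lam ε 0 y') y) 0
    let H : Matrix (Fin 2) (Fin 2) ℝ := !![hκκ, hκν; hνκ, hνν]
    dkR d L γ lam ε 0 0 = 0 ∧ dvR d L γ lam ε 0 0 = 0 ∧
    ContDiffAt ℝ 2 f (0, 0) ∧
    H.det < 0 ∧
    (∃ (μ₁ μ₂ : ℝ) (v₁ v₂ : Fin 2 → ℝ), 0 < μ₁ ∧ μ₂ < 0 ∧ v₁ ≠ 0 ∧ v₂ ≠ 0 ∧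
      H.mulVec v₁ = μ₁ • v₁ ∧ H.mulVec v₂ = μ₂ • v₂) ∧
    ¬ IsLocalMin f (0, 0) ∧ ¬ IsLocalMax f (0, 0) :=
  stmt7_general d L hd γ lam ε hγ hlam
end
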